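/- arXiv:2504.03573 — 2 statements merged into one kernel-verified Lean document; each statement's English description precedes it below -/
import Mathlib

section
/- Let x_1,…,x_m ∈ ℝ be distinct points with weights w_1,…,w_m ∈ ℝ, and y_1,…,y_n ∈ ℝ be distinct points with weights v_1,…,v_n ∈ ℝ. Let ℓ^x_p denote the Lagrange basis polynomial of the nodes x_1,…,x_m associated with x_p, and ℓ^y_q the Lagrange basis polynomial of the nodes y_1,…,y_n associated with y_q. Assume both quadrature rules are exact up to degree D on [-1,1]: for every real polynomial P with deg P ≤ D, Σ_{p=1}^m w_p P(x_p) = ∫_{-1}^{1} P(t) dt = Σ_{q=1}^n v_q P(y_q). Let f and g be real polynomials with deg f < m, deg g < n, and deg f + deg g ≤ D. Then the two point-to-point-interpolated quadrature sums agree: Σ_{p=1}^m w_p f(x_p) (Σ_{q=1}^n ℓ^y_q(x_p) g(y_q)) = Σ_{q=1}^n v_q g(y_q) (Σ_{p=1}^m ℓ^x_p(y_q) f(x_p)). -/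
open Polynomial Finset

/-!
Since `deg g < n`, Lagrange interpolation of `g` on the nodes `y` reproduces `g`, so the left
side is the `x`-quadrature of `f * g`; symmetrically the right side is the `y`-quadrature of
`f * g`. As `deg (f * g) ≤ D`, both rules integrate `f * g` exactly over `[-1, 1]`.
-/

theorem Lagrange.sum_eval_basis_mul_eval {F ι : Type*} [Field F] [DecidableEq ι] {s : Finset ι}
    {v : ι → F} (hvs : Set.InjOn v s) {p : F[X]} (hp : p.degree < #s) (t : F) :
    ∑ i ∈ s, (Lagrange.basis s v i).eval t * p.eval (v i) = p.eval t := by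
  conv_rhs => rw [Lagrange.eq_interpolate hvs hp, Lagrange.interpolate_apply, eval_finsetSum]
  exact sum_congr rfl fun i _ => by rw [eval_mul, eval_C, mul_comm]

theorem Lagrange.sum_univ_eval_basis_mul_eval {F ι : Type*} [Field F] [Fintype ι] [DecidableEq ι]
    {v : ι → F} (hv : Function.Injective v) {p : F[X]} (hp : p.natDegree < Fintype.card ι)
    (t : F) :
    ∑ i, (Lagrange.basis univ v i).eval t * p.eval (v i) = p.eval t :=
  Lagrange.sum_eval_basis_mul_eval hv.injOn
    (degree_le_natDegree.trans_lt (by rw [card_univ]; exact_mod_cast hp)) t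

/-- If both quadrature rules are exact up to degree `D` on `[-1,1]`,
`deg f < m`, `deg g < n` and `deg f + deg g ≤ D`, then the two
point-to-point-interpolated quadrature sums agree. -/
theorem p2p_interp_quadrature_symm {m n D : ℕ}
    (x : Fin m → ℝ) (hx : Function.Injective x) (w : Fin m → ℝ)
    (y : Fin n → ℝ) (hy : Function.Injective y) (v : Fin n → ℝ)
    (hwx : ∀ P : ℝ[X], P.natDegree ≤ D →
      ∑ p, w p * P.eval (x p) = ∫ t in (-1:ℝ)..1, P.eval t)
    (hvy : ∀ P : ℝ[X], P.natDegree ≤ D →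
      ∑ q, v q * P.eval (y q) = ∫ t in (-1:ℝ)..1, P.eval t)
    (f g : ℝ[X]) (hf : f.natDegree < m) (hg : g.natDegree < n)
    (hfg : f.natDegree + g.natDegree ≤ D) :
    ∑ p, w p * f.eval (x p) *
        (∑ q, (Lagrange.basis Finset.univ y q).eval (x p) * g.eval (y q))
      = ∑ q, v q * g.eval (y q) *
        (∑ p, (Lagrange.basis Finset.univ x p).eval (y q) * f.eval (x p)) := by
  have hfm : f.natDegree < Fintype.card (Fin m) := by rwa [Fintype.card_fin]
  have hgn : g.natDegree < Fintype.card (Fin n) := by rwa [Fintype.card_fin]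
  have hd : (f * g).natDegree ≤ D := natDegree_mul_le.trans hfg
  calc _ = ∑ p, w p * (f * g).eval (x p) := sum_congr rfl fun p _ => by
          rw [Lagrange.sum_univ_eval_basis_mul_eval hy hgn, eval_mul, mul_assoc]
    _ = ∫ t in (-1:ℝ)..1, (f * g).eval t := hwx _ hd
    _ = ∑ q, v q * (f * g).eval (y q) := (hvy _ hd).symm
    _ = _ := sum_congr rfl fun q _ => by
          rw [Lagrange.sum_univ_eval_basis_mul_eval hx hfm, eval_mul, mul_comm (f.eval _),
            mul_assoc]
end

section
/- Let Q be a finite index set of unified quadrature points on a shared interface, with weights w_q ∈ ℝ, metric terms J_q ∈ ℝ, and normals n_q ∈ ℝ^d (the left element's outward normal; the right element's outward normal at the same point is -n_q). Let a_i(q) ∈ ℝ (i = 1,…,N_l) be the left basis traces, b_j(q) ∈ ℝ (j = 1,…,N_r) the right basis traces, and g^l_i(q), g^r_j(q) ∈ ℝ^d the corresponding gradient traces, and let τ ∈ ℝ. Define, via the quadrature sums Σ_{q∈Q} w_q J_q (…): M_A(i,j) = Σ w_q J_q a_i (n_q·g^l_j), M'_A(i,j) = Σ w_q J_q (g^l_i·n_q)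 a_j, M_E(i,j) = 2τ Σ w_q J_q a_i a_j (all N_l×N_l); M_B(i,j) = Σ w_q J_q b_i ((-n_q)·g^r_j), M'_B(i,j) = Σ w_q J_q (g^r_i·(-n_q)) b_j, M_F(i,j) = 2τ Σ w_q J_q b_i b_j (all N_r×N_r); M_C(i,j) = Σ w_q J_q a_i (n_q·g^r_j), M'_D(i,j) = Σ w_q J_q (g^l_i·n_q) b_j, M_G(i,j) = 2τ Σ w_q J_q a_i b_j (all N_l×N_r); M'_C(i,j) = Σ w_q J_q (g^r_i·(-n_q)) a_j, M_D(i,j) = Σ w_q J_q b_i ((-n_q)·g^l_j), M'_G(i,j) = 2τ Σ w_q J_q b_i a_j (all N_r×N_l). Then the assembled SIPG face block matrix, with upper-left block -M_A - M'_A + M_E, upper-right block -M_C + M'_D - M_G, lower-left block M'_C - M_D - M'_G, and lower-right block -M_B - M'_B + M_F, is symmetric. -/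
/-!
Put the two bases side by side as one basis indexed by `Fin Nl ⊕ Fin Nr`, extending each function
by zero across the face. Every entry of the face matrix is then the same quadrature bilinear form
evaluated on a pair of basis functions, in terms of their jumps and normal fluxes on the shared
points; because both sides are integrated with one rule, that form is symmetric under exchanging
its two arguments, so the face matrix is a symmetric Gram matrix.
-/

open Matrix RealInnerProductSpace

section SIPGFace

variable {Q ι κ E : Type*} [Fintype Q] [NormedAddCommGroup E] [InnerProductSpace ℝ E]

/-- `ju`, `jv` are jumps and `su`, `sv` normal fluxes at the quadrature points. The flux is the sum
(twice the average) of the two one-sided normal derivatives, which is why the penalty is `2 * τ`. -/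
def quadratureSIPGForm (c : Q → ℝ) (τ : ℝ) (ju su jv sv : Q → ℝ) : ℝ :=
  ∑ q, c q * (-(ju q * sv q) - su q * jv q + 2 * τ * (ju q * jv q))

theorem quadratureSIPGForm_comm (c : Q → ℝ) (τ : ℝ) (ju su jv sv : Q → ℝ) :
    quadratureSIPGForm c τ ju su jv sv = quadratureSIPGForm c τ jv sv ju su :=
  Finset.sum_congr rfl fun q _ => by ring

def sipgFaceMatrix (c : Q → ℝ) (τ : ℝ) (jump flux : ι → Q → ℝ) : Matrix ι ι ℝ :=
  of fun i j => quadratureSIPGForm c τ (jump i) (flux i) (jump j) (flux j)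

theorem sipgFaceMatrix_isSymm (c : Q → ℝ) (τ : ℝ) (jump flux : ι → Q → ℝ) :
    (sipgFaceMatrix c τ jump flux).IsSymm :=
  IsSymm.ext fun _ _ => quadratureSIPGForm_comm c τ _ _ _ _

theorem fromBlocks_eq_sipgFaceMatrix (w J : Q → ℝ) (n : Q → E) (a : ι → Q → ℝ) (b : κ → Q → ℝ)
    (gl : ι → Q → E) (gr : κ → Q → E) (τ : ℝ) :
    fromBlocks
      (-(Matrix.of fun (i j : ι) => ∑ q, w q * J q * (a i q * ⟪n q, gl j q⟫))
        - (Matrix.of fun (i j : ι) => ∑ q, w q * J q * (⟪gl i q, n q⟫ * a j q))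
        + (Matrix.of fun (i j : ι) => 2 * τ * ∑ q, w q * J q * (a i q * a j q)))
      (-(Matrix.of fun (i : ι) (j : κ) => ∑ q, w q * J q * (a i q * ⟪n q, gr j q⟫))
        + (Matrix.of fun (i : ι) (j : κ) => ∑ q, w q * J q * (⟪gl i q, n q⟫ * b j q))
        - (Matrix.of fun (i : ι) (j : κ) => 2 * τ * ∑ q, w q * J q * (a i q * b j q)))
      ((Matrix.of fun (i : κ) (j : ι) => ∑ q, w q * J q * (⟪gr i q, -n q⟫ * a j q))
        - (Matrix.of fun (i : κ) (j : ι) => ∑ q, w q * J q * (b i q * ⟪-n q, gl j q⟫))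
        - (Matrix.of fun (i : κ) (j : ι) => 2 * τ * ∑ q, w q * J q * (b i q * a j q)))
      (-(Matrix.of fun (i j : κ) => ∑ q, w q * J q * (b i q * ⟪-n q, gr j q⟫))
        - (Matrix.of fun (i j : κ) => ∑ q, w q * J q * (⟪gr i q, -n q⟫ * b j q))
        + (Matrix.of fun (i j : κ) => 2 * τ * ∑ q, w q * J q * (b i q * b j q)))
    = sipgFaceMatrix (fun q => w q * J q) τ (Sum.elim a (-b))
        (Sum.elim (fun i q => ⟪gl i q, n q⟫) (fun j q => ⟪gr j q, n q⟫)) := by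
  ext (i | i) (j | j) <;>
  simp only [fromBlocks_apply₁₁, fromBlocks_apply₁₂, fromBlocks_apply₂₁, fromBlocks_apply₂₂,
    sipgFaceMatrix, quadratureSIPGForm, Matrix.add_apply, Matrix.sub_apply, Matrix.neg_apply,
    of_apply, Sum.elim_inl, Sum.elim_inr, Pi.neg_apply, inner_neg_left, inner_neg_right,
    Finset.mul_sum, ← Finset.sum_neg_distrib, ← Finset.sum_sub_distrib,
    ← Finset.sum_add_distrib] <;>
  refine Finset.sum_congr rfl fun q _ => ?_ <;>
  simp only [real_inner_comm (n q)] <;>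
  ring

end SIPGFace

/-- evaluating all SIPG interface-flux inner products with a single
unified quadrature rule on the shared trace yields a symmetric face block matrix,
regardless of the (possibly non-conforming) bases on the two sides. -/
theorem sipg_unified_quadrature_block_symm {d Nl Nr : ℕ} {Q : Type*} [Fintype Q]
    (w J : Q → ℝ) (n : Q → EuclideanSpace ℝ (Fin d))
    (a : Fin Nl → Q → ℝ) (b : Fin Nr → Q → ℝ)
    (gl : Fin Nl → Q → EuclideanSpace ℝ (Fin d))
    (gr : Fin Nr → Q → EuclideanSpace ℝ (Fin d))
    (τ : ℝ) :
    fromBlocks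
      (-(Matrix.of fun (i j : Fin Nl) => ∑ q, w q * J q * (a i q * ⟪n q, gl j q⟫))
        - (Matrix.of fun (i j : Fin Nl) => ∑ q, w q * J q * (⟪gl i q, n q⟫ * a j q))
        + (Matrix.of fun (i j : Fin Nl) => 2 * τ * ∑ q, w q * J q * (a i q * a j q)))
      (-(Matrix.of fun (i : Fin Nl) (j : Fin Nr) => ∑ q, w q * J q * (a i q * ⟪n q, gr j q⟫))
        + (Matrix.of fun (i : Fin Nl) (j : Fin Nr) => ∑ q, w q * J q * (⟪gl i q, n q⟫ * b j q))
        - (Matrix.of fun (i : Fin Nl) (j : Fin Nr) => 2 * τ * ∑ q, w q * J q * (a i q * b j q)))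
      ((Matrix.of fun (i : Fin Nr) (j : Fin Nl) => ∑ q, w q * J q * (⟪gr i q, -n q⟫ * a j q))
        - (Matrix.of fun (i : Fin Nr) (j : Fin Nl) => ∑ q, w q * J q * (b i q * ⟪-n q, gl j q⟫))
        - (Matrix.of fun (i : Fin Nr) (j : Fin Nl) => 2 * τ * ∑ q, w q * J q * (b i q * a j q)))
      (-(Matrix.of fun (i j : Fin Nr) => ∑ q, w q * J q * (b i q * ⟪-n q, gr j q⟫))
        - (Matrix.of fun (i j : Fin Nr) => ∑ q, w q * J q * (⟪gr i q, -n q⟫ * b j q))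
        + (Matrix.of fun (i j : Fin Nr) => 2 * τ * ∑ q, w q * J q * (b i q * b j q)))
    = (fromBlocks
      (-(Matrix.of fun (i j : Fin Nl) => ∑ q, w q * J q * (a i q * ⟪n q, gl j q⟫))
        - (Matrix.of fun (i j : Fin Nl) => ∑ q, w q * J q * (⟪gl i q, n q⟫ * a j q))
        + (Matrix.of fun (i j : Fin Nl) => 2 * τ * ∑ q, w q * J q * (a i q * a j q)))
      (-(Matrix.of fun (i : Fin Nl) (j : Fin Nr) => ∑ q, w q * J q * (a i q * ⟪n q, gr j q⟫))
        + (Matrix.of fun (i : Fin Nl) (j : Fin Nr) => ∑ q, w q * J q * (⟪gl i q, n q⟫ * b j q))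
        - (Matrix.of fun (i : Fin Nl) (j : Fin Nr) => 2 * τ * ∑ q, w q * J q * (a i q * b j q)))
      ((Matrix.of fun (i : Fin Nr) (j : Fin Nl) => ∑ q, w q * J q * (⟪gr i q, -n q⟫ * a j q))
        - (Matrix.of fun (i : Fin Nr) (j : Fin Nl) => ∑ q, w q * J q * (b i q * ⟪-n q, gl j q⟫))
        - (Matrix.of fun (i : Fin Nr) (j : Fin Nl) => 2 * τ * ∑ q, w q * J q * (b i q * a j q)))
      (-(Matrix.of fun (i j : Fin Nr) => ∑ q, w q * J q * (b i q * ⟪-n q, gr j q⟫))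
        - (Matrix.of fun (i j : Fin Nr) => ∑ q, w q * J q * (⟪gr i q, -n q⟫ * b j q))
        + (Matrix.of fun (i j : Fin Nr) => 2 * τ * ∑ q, w q * J q * (b i q * b j q))))ᵀ := by
  rw [fromBlocks_eq_sipgFaceMatrix]
  exact (sipgFaceMatrix_isSymm _ τ _ _).eq.symm
end
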